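/- Corollary 2 (simplified dual bounds with anchors and resource capacity at zero): let F : ℝ^n → ℝ be differentiable with L-Lipschitz continuous gradient, μ > 0, b₀ ∈ ℝ^n, A ∈ ℝ^{m×n} with nonzero j-th row a_j, and η = 1/‖a_j‖². Suppose (q̲, λ̲), (q, λ), (q̄, λ̄) satisfy μ q̲ + ∇F(0) + b₀ + Aᵀλ̲ = 0, ∇F(q) + b₀ + Aᵀλ = 0, and L q̄ + ∇F(0) + b₀ + Aᵀλ̄ = 0, with λ̲_l = λ_l = λ̄_l = 0 for every l ≠ j, λ̲_j ≥ 0, λ_j ≥ 0, λ̄_j ≥ 0, and tightness with zero right-hand side: ⟨a_j, q̲⟩ = 0 and ⟨a_j, q̄⟩ = 0. Then [ η[⟨a_j, −∇F(0) − b₀⟩]^+ − √η L(‖q̄‖ + ‖q‖) ]^+ ≤ λ_j ≤ η[⟨a_j, −∇F(0) − b₀⟩]^+ + √η L(‖q̄‖ + ‖q‖). -/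

import Mathlib

open scoped RealInnerProductSpace

/-- `Aᵀ λ = ∑ l, λ_l a_l` where `a_l` is the `l`-th row of `A`, as a Euclidean vector. -/
noncomputable def transMul {m n : ℕ} (A : Matrix (Fin m) (Fin n) ℝ) (lam : Fin m → ℝ) :
    EuclideanSpace ℝ (Fin n) :=
  WithLp.toLp 2 (fun i => ∑ l, lam l * A l i)

/-- The `j`-th row of `A` regarded as a Euclidean vector. -/
noncomputable def rowVec {m n : ℕ} (A : Matrix (Fin m) (Fin n) ℝ) (j : Fin m) :
    EuclideanSpace ℝ (Fin n) :=
  WithLp.toLp 2 (fun i => A j i)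

/-!
With a single active constraint, stationarity `w + λ_j a_j = 0` pins the multiplier down as
`λ_j = η ⟪a_j, -w⟫`. For the upper model, tightness `⟪a_j, q̄⟫ = 0` removes the term `L q̄`, so
`λ̄_j = η ⟪a_j, -∇F(0) - b₀⟫`; this is nonnegative, hence equals `η [⟪a_j, -∇F(0) - b₀⟫]⁺`.
The original problem differs from it only through `∇F(q) - ∇F(0)`, so by Cauchy–Schwarz and the
Lipschitz bound `|λ_j - λ̄_j| ≤ η ‖a_j‖ L ‖q‖ = √η L ‖q‖`.
-/

lemma transMul_eq_smul_rowVec {m n : ℕ} (A : Matrix (Fin m) (Fin n) ℝ) {j : Fin m}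
    {lam : Fin m → ℝ} (hlam : ∀ l, l ≠ j → lam l = 0) :
    transMul A lam = lam j • rowVec A j := by
  ext i
  show ∑ l, lam l * A l i = lam j * A j i
  exact Finset.sum_eq_single j (fun l _ hl => by rw [hlam l hl, zero_mul]) (by simp)

section InnerProductSpace

variable {E : Type*} [NormedAddCommGroup E] [InnerProductSpace ℝ E]

lemma eq_inner_div_norm_sq_of_add_smul_eq_zero {a w : E} {c : ℝ} (ha : a ≠ 0)
    (h : w + c • a = 0) : c = ⟪a, -w⟫ / ‖a‖ ^ 2 := by
  have hw : -w = c • a := by rw [← add_eq_zero_iff_neg_eq.mp h]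
  rw [hw, real_inner_smul_right, real_inner_self_eq_norm_sq,
    mul_div_cancel_right₀ _ (pow_ne_zero 2 (norm_ne_zero_iff.mpr ha))]

lemma abs_inner_div_norm_sq_le (a v : E) : |⟪a, v⟫ / ‖a‖ ^ 2| ≤ ‖a‖⁻¹ * ‖v‖ := by
  rcases eq_or_ne a 0 with rfl | ha
  · simp
  have hna : 0 < ‖a‖ := norm_pos_iff.mpr ha
  rw [abs_div, abs_of_nonneg (sq_nonneg ‖a‖), div_le_iff₀ (pow_pos hna 2)]
  calc |⟪a, v⟫| ≤ ‖a‖ * ‖v‖ := abs_real_inner_le_norm a v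
    _ = ‖a‖⁻¹ * ‖v‖ * ‖a‖ ^ 2 := by field_simp

end InnerProductSpace

lemma le_and_le_of_abs_sub_le {x y e e' : ℝ} (hx : 0 ≤ x) (h : |x - y| ≤ e) (he : e ≤ e') :
    max (y - e') 0 ≤ x ∧ x ≤ y + e' := by
  have := abs_le.mp h
  exact ⟨max_le (by linarith) hx, by linarith⟩

theorem dual_bounds_anchor_zero_capacity_zero_general
    (n m : ℕ) (F : EuclideanSpace ℝ (Fin n) → ℝ) (L : ℝ) (hL : 0 < L)
    (hlip : ∀ x y : EuclideanSpace ℝ (Fin n),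
      ‖gradient F x - gradient F y‖ ≤ L * ‖x - y‖)
    (b0 q qup : EuclideanSpace ℝ (Fin n))
    (A : Matrix (Fin m) (Fin n) ℝ) (j : Fin m) (haj : rowVec A j ≠ 0)
    (lamlow lam lamup : Fin m → ℝ)
    (hstat : gradient F q + b0 + transMul A lam = 0)
    (hstatup : L • qup + gradient F 0 + b0 + transMul A lamup = 0)
    (hcs : ∀ l, l ≠ j → lamlow l = 0 ∧ lam l = 0 ∧ lamup l = 0)
    (hlamj : 0 ≤ lam j) (hlamupj : 0 ≤ lamup j)
    (htightup : ⟪rowVec A j, qup⟫ = 0)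
    (η : ℝ) (hη : η = 1 / ‖rowVec A j‖ ^ 2) :
    max (η * max ⟪rowVec A j, -gradient F 0 - b0⟫ 0 -
        Real.sqrt η * (L * (‖qup‖ + ‖q‖))) 0 ≤ lam j ∧
      lam j ≤ η * max ⟪rowVec A j, -gradient F 0 - b0⟫ 0 +
        Real.sqrt η * (L * (‖qup‖ + ‖q‖)) := by
  set a := rowVec A j
  rw [transMul_eq_smul_rowVec A fun l hl => (hcs l hl).2.1] at hstat
  rw [transMul_eq_smul_rowVec A fun l hl => (hcs l hl).2.2] at hstatup
  have hlam := eq_inner_div_norm_sq_of_add_smul_eq_zero haj hstat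
  have hlamup : lamup j = ⟪a, -gradient F 0 - b0⟫ / ‖a‖ ^ 2 := by
    have hw : -(L • qup + gradient F 0 + b0) = (-gradient F 0 - b0) - L • qup := by abel
    rw [eq_inner_div_norm_sq_of_add_smul_eq_zero haj hstatup, hw, inner_sub_right,
      real_inner_smul_right, htightup, mul_zero, sub_zero]
  have hupper_nonneg : 0 ≤ ⟪a, -gradient F 0 - b0⟫ := by
    rw [hlamup] at hlamupj
    simpa only [zero_mul] using (le_div_iff₀ (pow_pos (norm_pos_iff.mpr haj) 2)).mp hlamupj
  have hgap : |lam j - lamup j| ≤ Real.sqrt η * (L * ‖q‖) := by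
    have hw : -(gradient F q + b0) - (-gradient F 0 - b0) = gradient F 0 - gradient F q := by
      abel
    rw [hlam, hlamup, ← sub_div, ← inner_sub_right, hw, hη, one_div, Real.sqrt_inv,
      Real.sqrt_sq (norm_nonneg a)]
    calc _ ≤ ‖a‖⁻¹ * ‖gradient F 0 - gradient F q‖ := abs_inner_div_norm_sq_le _ _
      _ ≤ ‖a‖⁻¹ * (L * ‖q‖) := by
        gcongr
        simpa using hlip 0 q
  have hηupper : η * ⟪a, -gradient F 0 - b0⟫ = lamup j := by rw [hlamup, hη, one_div_mul_eq_div]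
  rw [max_eq_left hupper_nonneg, hηupper]
  exact le_and_le_of_abs_sub_le hlamj hgap (by gcongr; exact le_add_of_nonneg_left (norm_nonneg _))

/-- Corollary 2 (simplified dual bounds with anchors and resource capacity at zero):
with the stationarity conditions (anchored at `r = 0`) of the lower model, original, and
upper model problems, vanishing of all multiplier components except the `j`-th,
nonnegativity of the `j`-th multipliers, and tightness with zero right-hand side,
the shadow price satisfies
`[η[⟨a_j, −∇F(0) − b₀⟩]⁺ − √η L(‖q̄‖ + ‖q‖)]⁺ ≤ λ_j ≤ η[⟨a_j, −∇F(0) − b₀⟩]⁺ + √η L(‖q̄‖ + ‖q‖)`. -/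
theorem dual_bounds_anchor_zero_capacity_zero
    (n m : ℕ) (F : EuclideanSpace ℝ (Fin n) → ℝ) (L μ : ℝ) (hL : 0 < L) (hμ : 0 < μ)
    (hF : Differentiable ℝ F)
    (hlip : ∀ x y : EuclideanSpace ℝ (Fin n),
      ‖gradient F x - gradient F y‖ ≤ L * ‖x - y‖)
    (b0 qlow q qup : EuclideanSpace ℝ (Fin n))
    (A : Matrix (Fin m) (Fin n) ℝ) (j : Fin m) (haj : rowVec A j ≠ 0)
    (lamlow lam lamup : Fin m → ℝ)
    (hstatlow : μ • qlow + gradient F 0 + b0 + transMul A lamlow = 0)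
    (hstat : gradient F q + b0 + transMul A lam = 0)
    (hstatup : L • qup + gradient F 0 + b0 + transMul A lamup = 0)
    (hcs : ∀ l, l ≠ j → lamlow l = 0 ∧ lam l = 0 ∧ lamup l = 0)
    (hlamlowj : 0 ≤ lamlow j) (hlamj : 0 ≤ lam j) (hlamupj : 0 ≤ lamup j)
    (htightlow : ⟪rowVec A j, qlow⟫ = 0)
    (htightup : ⟪rowVec A j, qup⟫ = 0)
    (η : ℝ) (hη : η = 1 / ‖rowVec A j‖ ^ 2) :
    max (η * max ⟪rowVec A j, -gradient F 0 - b0⟫ 0 -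
        Real.sqrt η * (L * (‖qup‖ + ‖q‖))) 0 ≤ lam j ∧
      lam j ≤ η * max ⟪rowVec A j, -gradient F 0 - b0⟫ 0 +
        Real.sqrt η * (L * (‖qup‖ + ‖q‖)) :=
  dual_bounds_anchor_zero_capacity_zero_general n m F L hL hlip b0 q qup A j haj lamlow lam lamup
    hstat hstatup hcs hlamj hlamupj htightup η hη
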